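/- In the ADT deterministic model with q = n₁, if n₁ − 2n₂ ≥ m₁ − m₂ and n₂ ≤ m₂ ≤ m₁, then for independent binary random vectors x₁, x₂ of length q: H(y_a) − H(y_b) ≤ m₂ − n₂, where y_a = S^{q−m₁}x₁ ⊕ S^{q−m₂}x₂ and y_b = S^{q−n₁}x₁ ⊕ S^{q−n₂}x₂ and H denotes Shannon entropy in bits. -/

import Mathlib

open MeasureTheory ProbabilityTheory

instance : MeasurableSpace (ZMod 2) := ⊤
instance : MeasurableSingletonClass (ZMod 2) := ⟨fun _ => trivial⟩

/-- Shannon entropy, in bits, of a finitely-valued random variable `X` under `μ`. -/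
noncomputable def entB {Ω : Type*} [MeasurableSpace Ω] {β : Type*} [Fintype β]
    (μ : Measure Ω) (X : Ω → β) : ℝ :=
  -∑ x : β, ((μ (X ⁻¹' {x})).toReal * Real.logb 2 ((μ (X ⁻¹' {x})).toReal))

/-- Mutual information, in bits, `I(X;Y) = H(X) + H(Y) - H(X,Y)`. -/
noncomputable def miB {Ω : Type*} [MeasurableSpace Ω] {β γ : Type*} [Fintype β] [Fintype γ]
    (μ : Measure Ω) (X : Ω → β) (Y : Ω → γ) : ℝ :=
  entB μ X + entB μ Y - entB μ (fun ω => (X ω, Y ω))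

/-- The `q × q` down-shift matrix `S` over `𝔽₂`, applied `k` times to a vector:
`(S^k x) i = x (i - k)` for `i ≥ k` and `0` otherwise. -/
def downShift (q k : ℕ) (x : Fin q → ZMod 2) : Fin q → ZMod 2 :=
  fun i => if h : k ≤ i.val then
      x ⟨i.val - k, Nat.lt_of_le_of_lt (Nat.sub_le _ _) i.isLt⟩
    else 0

/-!
Let `A` be the top `n₁ - n₂` bits of `x₁` and `V` the top `n₂` bits of `x₂`.

Dropping the bottom `m₂ - n₂` bits of `y_a` loses at most `m₂ - n₂` bits of entropy, and the
remaining top `n₁ - m₂ + n₂` bits of `y_a` are a function of `(A, V)`, since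
`n₁ - m₂ + n₂ ≤ (n₁ - n₂) + (n₁ - m₁)`. Hence `H(y_a) ≤ H(A) + H(V) + m₂ - n₂`.

On the other side, the top `n₁ - n₂` bits of `y_b = x₁ ⊕ S^{n₁ - n₂} x₂` are `A`, and `y_b`
together with `x₁` determines `V`. As `V` is independent of `x₁`, submodularity of entropy gives
`H(A) + H(V) ≤ H(y_b)`.
-/

open Real Finset Function

section NegMulLog

theorem sum_mul_log_le_sum_mul_log {ι : Type*} [Fintype ι] {p q : ι → ℝ} (hp : ∀ i, 0 ≤ p i)
    (hq : ∀ i, 0 ≤ q i) (hpq : ∀ i, p i ≠ 0 → q i ≠ 0) (hsum : ∑ i, q i ≤ ∑ i, p i) :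
    ∑ i, p i * log (q i) ≤ ∑ i, p i * log (p i) := by
  have key : ∀ i, p i * log (q i) ≤ p i * log (p i) + (q i - p i) := by
    intro i
    rcases (hp i).eq_or_lt with h | h
    · simp [← h, hq i]
    · have hqi : 0 < q i := (hq i).lt_of_ne' (hpq i h.ne')
      have hlog := mul_le_mul_of_nonneg_left (log_le_sub_one_of_pos (div_pos hqi h)) h.le
      rw [log_div hqi.ne' h.ne', mul_sub, mul_sub, mul_div_cancel₀ _ h.ne'] at hlog
      linarith
  calc ∑ i, p i * log (q i) ≤ ∑ i, (p i * log (p i) + (q i - p i)) := sum_le_sum fun i _ => key i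
    _ ≤ ∑ i, p i * log (p i) := by rw [sum_add_distrib, sum_sub_distrib]; linarith

theorem negMulLog_add_le {a b : ℝ} (ha : 0 ≤ a) (hb : 0 ≤ b) :
    negMulLog (a + b) ≤ negMulLog a + negMulLog b := by
  rcases ha.eq_or_lt with rfl | ha
  · simp
  rcases hb.eq_or_lt with rfl | hb
  · simp
  have hla := mul_le_mul_of_nonneg_left (log_le_log ha (le_add_of_nonneg_right hb.le)) ha.le
  have hlb := mul_le_mul_of_nonneg_left (log_le_log hb (le_add_of_nonneg_left ha.le)) hb.le
  simp only [negMulLog, neg_mul, add_mul]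
  linarith

theorem sum_negMulLog_fiberwise_le {β γ : Type*} [Fintype β] [Fintype γ] [DecidableEq γ]
    (f : β → γ) {p : β → ℝ} (hp : ∀ x, 0 ≤ p x) :
    ∑ z, negMulLog (∑ x with f x = z, p x) ≤ ∑ x, negMulLog (p x) := by
  rw [← sum_fiberwise univ f fun x => negMulLog (p x)]
  gcongr with z
  exact le_sum_of_subadditive_on_pred negMulLog (0 ≤ ·) (by simp)
    (fun a b ha hb => negMulLog_add_le ha hb) (fun a b ha hb => add_nonneg ha hb) p
    fun x _ => hp x

theorem sum_negMulLog_add_negMulLog_sum_le {β γ : Type*} [Fintype β] [Fintype γ]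
    {r : β × γ → ℝ} (hr : ∀ t, 0 ≤ r t) :
    ∑ t, negMulLog (r t) + negMulLog (∑ t, r t) ≤
      ∑ x, negMulLog (∑ y, r (x, y)) + ∑ y, negMulLog (∑ x, r (x, y)) := by
  set s := ∑ t, r t
  set rX := fun x => ∑ y, r (x, y)
  set rY := fun y => ∑ x, r (x, y)
  have hrX : ∀ t, r t ≤ rX t.1 := fun t => single_le_sum (fun y _ => hr (t.1, y)) (mem_univ t.2)
  have hrY : ∀ t, r t ≤ rY t.2 := fun t => single_le_sum (fun x _ => hr (x, t.2)) (mem_univ t.1)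
  have hrX0 : ∀ x, 0 ≤ rX x := fun x => sum_nonneg fun y _ => hr (x, y)
  have hrY0 : ∀ y, 0 ≤ rY y := fun y => sum_nonneg fun x _ => hr (x, y)
  have hsX : ∑ x, rX x = s := (Fintype.sum_prod_type r).symm
  have hsY : ∑ y, rY y = s := (Fintype.sum_prod_type_right r).symm
  rcases (sum_nonneg fun t _ => hr t : 0 ≤ s).eq_or_lt with hs | hs
  · have hr0 : ∀ t, r t = 0 := fun t =>
      le_antisymm (hs ▸ single_le_sum (fun t _ => hr t) (mem_univ t)) (hr t)
    simp [s, hr0]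
  have hpos : ∀ t, r t ≠ 0 → 0 < rX t.1 ∧ 0 < rY t.2 := fun t ht =>
    ⟨(hr t).lt_of_ne' ht |>.trans_le (hrX t), (hr t).lt_of_ne' ht |>.trans_le (hrY t)⟩
  -- Gibbs against the product of the marginals, rescaled to total mass `s`.
  have hgibbs := sum_mul_log_le_sum_mul_log (q := fun t => rX t.1 * rY t.2 / s) hr
    (fun t => div_nonneg (mul_nonneg (hrX0 _) (hrY0 _)) hs.le)
    (fun t ht => (div_pos (mul_pos (hpos t ht).1 (hpos t ht).2) hs).ne') ?_
  · have hexpand : ∑ t, r t * log (rX t.1 * rY t.2 / s) =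
        ∑ x, rX x * log (rX x) + ∑ y, rY y * log (rY y) - s * log s := by
      have hterm : ∀ t, r t * log (rX t.1 * rY t.2 / s) =
          r t * log (rX t.1) + r t * log (rY t.2) - r t * log s := by
        intro t
        rcases eq_or_ne (r t) 0 with ht | ht
        · simp [ht]
        · rw [log_div (mul_pos (hpos t ht).1 (hpos t ht).2).ne' hs.ne',
            log_mul (hpos t ht).1.ne' (hpos t ht).2.ne']
          ring
      simp only [hterm, sum_sub_distrib, sum_add_distrib, ← sum_mul]
      congr 2
      · rw [Fintype.sum_prod_type]
        exact sum_congr rfl fun x _ => (sum_mul univ (fun y => r (x, y)) (log (rX x))).symm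
      · rw [Fintype.sum_prod_type_right]
        exact sum_congr rfl fun y _ => (sum_mul univ (fun x => r (x, y)) (log (rY y))).symm
    simp only [negMulLog, neg_mul, sum_neg_distrib]
    linarith
  · rw [← sum_div, Fintype.sum_prod_type, ← sum_mul_sum, hsX, hsY, mul_self_div_self]

end NegMulLog

section ProbMass

variable {Ω : Type*} [MeasurableSpace Ω] {μ : Measure Ω} {β γ : Type*} {X : Ω → β} {Y : Ω → γ}

def probMass (μ : Measure Ω) (X : Ω → β) (x : β) : ℝ := μ.real (X ⁻¹' {x})

lemma probMass_nonneg (x : β) : 0 ≤ probMass μ X x := measureReal_nonneg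

lemma probMass_congr {x : β} {y : γ} (h : ∀ ω, X ω = x ↔ Y ω = y) :
    probMass μ X x = probMass μ Y y := by
  simp only [probMass, Set.preimage, Set.mem_singleton_iff, h]

lemma entB_eq_sum_negMulLog [Fintype β] (μ : Measure Ω) (X : Ω → β) :
    entB μ X = (∑ x, negMulLog (probMass μ X x)) / log 2 := by
  simp only [entB, probMass, measureReal_def, negMulLog, logb, sum_div, ← sum_neg_distrib]
  congr! 1 with x
  ring

lemma probMass_pair_of_indepFun [MeasurableSpace β] [MeasurableSingletonClass β]
    [MeasurableSpace γ] [MeasurableSingletonClass γ] (hXY : IndepFun X Y μ) (x : β) (y : γ) :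
    probMass μ (fun ω => (X ω, Y ω)) (x, y) = probMass μ X x * probMass μ Y y := by
  have hpre : (fun ω => (X ω, Y ω)) ⁻¹' {(x, y)} = X ⁻¹' {x} ∩ Y ⁻¹' {y} := by
    ext; simp
  simp only [probMass, measureReal_def, hpre, ← ENNReal.toReal_mul,
    hXY.measure_inter_preimage_eq_mul _ _ (measurableSet_singleton x) (measurableSet_singleton y)]

variable [Fintype β] [MeasurableSpace β] [MeasurableSingletonClass β]

lemma probMass_comp [IsFiniteMeasure μ] [DecidableEq γ] (hX : Measurable X) (f : β → γ) (z : γ) :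
    probMass μ (fun ω => f (X ω)) z = ∑ x with f x = z, probMass μ X x := by
  have hpre : (fun ω => f (X ω)) ⁻¹' {z} = X ⁻¹' ↑(univ.filter (f · = z)) := by
    ext; simp
  simp only [probMass, measureReal_def, hpre]
  rw [← sum_measure_preimage_singleton _ fun x _ => hX (measurableSet_singleton x),
    ENNReal.toReal_sum fun x _ => measure_ne_top μ _]

lemma sum_probMass [IsProbabilityMeasure μ] (hX : Measurable X) : ∑ x, probMass μ X x = 1 := by
  simp only [probMass, measureReal_def]
  rw [← ENNReal.toReal_sum fun x _ => measure_ne_top μ _,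
    sum_measure_preimage_singleton _ fun x _ => hX (measurableSet_singleton x)]
  simp

variable [Fintype γ] [MeasurableSpace γ] [MeasurableSingletonClass γ]

lemma sum_probMass_pair_right [IsFiniteMeasure μ] (hX : Measurable X) (hY : Measurable Y)
    (x : β) : ∑ y, probMass μ (fun ω => (X ω, Y ω)) (x, y) = probMass μ X x := by
  classical
  rw [probMass_comp (hX.prodMk hY) Prod.fst x, sum_filter, Fintype.sum_prod_type, sum_comm]
  simp

lemma sum_probMass_pair_left [IsFiniteMeasure μ] (hX : Measurable X) (hY : Measurable Y)
    (y : γ) : ∑ x, probMass μ (fun ω => (X ω, Y ω)) (x, y) = probMass μ Y y := by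
  classical
  rw [probMass_comp (hX.prodMk hY) Prod.snd y, sum_filter, Fintype.sum_prod_type_right, sum_comm]
  simp

end ProbMass

section Entropy

variable {Ω : Type*} [MeasurableSpace Ω] {μ : Measure Ω}
  {β γ δ ε : Type*} [Fintype β] [MeasurableSpace β] [MeasurableSingletonClass β]
  [Fintype γ] {X : Ω → β} {Y : Ω → γ}

theorem entB_comp_le [IsFiniteMeasure μ] (hX : Measurable X) (f : β → γ) :
    entB μ (fun ω => f (X ω)) ≤ entB μ X := by
  classical
  simp only [entB_eq_sum_negMulLog, probMass_comp hX f]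
  gcongr
  exact sum_negMulLog_fiberwise_le f fun x => probMass_nonneg x

theorem entB_le_of_factorsThrough [IsProbabilityMeasure μ] (hX : Measurable X)
    (h : FactorsThrough Y X) : entB μ Y ≤ entB μ X := by
  obtain ⟨ω₀⟩ := nonempty_of_isProbabilityMeasure μ
  have hY : Y = fun ω => extend X Y (fun _ => Y ω₀) (X ω) :=
    funext fun ω => (h.extend_apply _ ω).symm
  rw [hY]
  exact entB_comp_le hX _

theorem entB_le_logb_card [IsProbabilityMeasure μ] (hX : Measurable X) :
    entB μ X ≤ logb 2 (Fintype.card β) := by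
  have hβ : Nonempty β := (nonempty_of_isProbabilityMeasure μ).map X
  have hcard : (0 : ℝ) < Fintype.card β := by exact_mod_cast Fintype.card_pos
  have h := sum_mul_log_le_sum_mul_log (q := fun _ => (Fintype.card β : ℝ)⁻¹)
    (fun x => probMass_nonneg (μ := μ) (X := X) x) (fun _ => inv_nonneg.mpr hcard.le)
    (fun _ _ => inv_ne_zero hcard.ne') (by simp [sum_probMass hX, hcard.ne'])
  rw [← sum_mul, sum_probMass hX, one_mul, log_inv] at h
  rw [entB_eq_sum_negMulLog, logb]
  gcongr
  simp only [negMulLog, neg_mul, sum_neg_distrib]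
  linarith

variable [MeasurableSpace γ] [MeasurableSingletonClass γ]

theorem entB_pair_le [IsProbabilityMeasure μ] (hX : Measurable X) (hY : Measurable Y) :
    entB μ (fun ω => (X ω, Y ω)) ≤ entB μ X + entB μ Y := by
  have h := sum_negMulLog_add_negMulLog_sum_le
    fun t => probMass_nonneg (μ := μ) (X := fun ω => (X ω, Y ω)) t
  rw [sum_probMass (hX.prodMk hY), negMulLog_one, add_zero] at h
  simp only [sum_probMass_pair_right hX hY, sum_probMass_pair_left hX hY] at h
  simp only [entB_eq_sum_negMulLog, ← add_div]
  gcongr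

theorem entB_pair_of_indepFun [IsProbabilityMeasure μ] (hX : Measurable X) (hY : Measurable Y)
    (hXY : IndepFun X Y μ) : entB μ (fun ω => (X ω, Y ω)) = entB μ X + entB μ Y := by
  simp only [entB_eq_sum_negMulLog, Fintype.sum_prod_type, probMass_pair_of_indepFun hXY,
    negMulLog_mul, sum_add_distrib, ← sum_mul, ← mul_sum, sum_probMass hX, sum_probMass hY]
  ring

variable [Fintype δ] [MeasurableSpace δ] [MeasurableSingletonClass δ] {Z : Ω → δ}

theorem entB_submodular [IsProbabilityMeasure μ] (hX : Measurable X) (hY : Measurable Y)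
    (hZ : Measurable Z) :
    entB μ (fun ω => (X ω, Y ω, Z ω)) + entB μ X ≤
      entB μ (fun ω => (X ω, Y ω)) + entB μ (fun ω => (X ω, Z ω)) := by
  have hXY : ∀ x y, ∑ z, probMass μ (fun ω => (X ω, Y ω, Z ω)) (x, y, z) =
      probMass μ (fun ω => (X ω, Y ω)) (x, y) := fun x y => by
    rw [← sum_probMass_pair_right (hX.prodMk hY) hZ]
    exact sum_congr rfl fun z _ => probMass_congr fun ω => by simp only [Prod.mk.injEq]; tauto
  have hXZ : ∀ x z, ∑ y, probMass μ (fun ω => (X ω, Y ω, Z ω)) (x, y, z) =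
      probMass μ (fun ω => (X ω, Z ω)) (x, z) := fun x z => by
    rw [← sum_probMass_pair_right (hX.prodMk hZ) hY]
    exact sum_congr rfl fun y _ => probMass_congr fun ω => by simp only [Prod.mk.injEq]; tauto
  -- Subadditivity on each fibre `X = x`, summed over `x`.
  have h := sum_le_sum fun x (_ : x ∈ univ) => sum_negMulLog_add_negMulLog_sum_le
    fun t => probMass_nonneg (μ := μ) (X := fun ω => (X ω, Y ω, Z ω)) (x, t)
  simp only [sum_add_distrib, hXY, hXZ, sum_probMass_pair_right hX (hY.prodMk hZ)] at h
  simp only [entB_eq_sum_negMulLog, ← add_div]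
  gcongr ?_ / _
  simpa only [Fintype.sum_prod_type] using h

variable [Fintype ε] [MeasurableSpace ε] [MeasurableSingletonClass ε]

/- `H(X) + H(Y) = H(X, Y) ≤ H(A, W, X) ≤ H(A, W) + H(A, X) - H(A) ≤ H(W) + H(X) - H(A)`. -/
theorem entB_add_entB_le_of_factorsThrough [IsProbabilityMeasure μ] {A : Ω → δ} {W : Ω → ε}
    (hX : Measurable X) (hY : Measurable Y) (hA : Measurable A) (hW : Measurable W)
    (hXY : IndepFun X Y μ) (hAX : FactorsThrough A X) (hAW : FactorsThrough A W)
    (hYWX : FactorsThrough Y fun ω => (W ω, X ω)) :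
    entB μ A + entB μ Y ≤ entB μ W := by
  have hjoint : entB μ X + entB μ Y ≤ entB μ (fun ω => (A ω, W ω, X ω)) := by
    rw [← entB_pair_of_indepFun hX hY hXY]
    refine entB_le_of_factorsThrough (hA.prodMk (hW.prodMk hX)) fun ω ω' h => ?_
    simp only [Prod.mk.injEq] at h ⊢
    exact ⟨h.2.2, hYWX (Prod.ext h.2.1 h.2.2)⟩
  have hAW' : entB μ (fun ω => (A ω, W ω)) ≤ entB μ W :=
    entB_le_of_factorsThrough hW fun ω ω' h => by rw [hAW h, h]
  have hAX' : entB μ (fun ω => (A ω, X ω)) ≤ entB μ X :=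
    entB_le_of_factorsThrough hX fun ω ω' h => by rw [hAX h, h]
  linarith [entB_submodular (μ := μ) hA hW hX]

end Entropy

section DownShift

variable {q : ℕ}

-- Index `0` is the most significant level: `downShift` moves bits towards larger indices.
def topBits {α : Type*} (k : ℕ) (x : Fin q → α) : {i : Fin q // i.val < k} → α := fun i => x i

lemma topBits_eq_topBits_iff {α : Type*} {k : ℕ} {x y : Fin q → α} :
    topBits k x = topBits k y ↔ ∀ i : Fin q, i.val < k → x i = y i := by
  simp [topBits, funext_iff]

lemma topBits_add {α : Type*} [Add α] (k : ℕ) (x y : Fin q → α) :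
    topBits k (x + y) = topBits k x + topBits k y :=
  rfl

lemma downShift_zero (x : Fin q → ZMod 2) : downShift q 0 x = x := by
  ext i
  simp [downShift]

lemma topBits_add_downShift {k l : ℕ} (hl : l ≤ k) (x y : Fin q → ZMod 2) :
    topBits l (x + downShift q k y) = topBits l x := by
  ext ⟨i, hi⟩
  simp [topBits, downShift, show ¬k ≤ i.val by omega]

lemma topBits_downShift_eq {j k l : ℕ} (hl : l ≤ j + k) {x y : Fin q → ZMod 2}
    (h : topBits j x = topBits j y) :
    topBits l (downShift q k x) = topBits l (downShift q k y) := by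
  rw [topBits_eq_topBits_iff] at h ⊢
  intro i hi
  simp only [downShift]
  split_ifs with hk
  · exact h _ (by simp only; omega)
  · rfl

lemma topBits_eq_of_downShift_eq {k l : ℕ} (hl : l + k ≤ q) {x y : Fin q → ZMod 2}
    (h : downShift q k x = downShift q k y) : topBits l x = topBits l y := by
  rw [topBits_eq_topBits_iff]
  intro i hi
  simpa [downShift] using congrFun h ⟨i + k, by omega⟩

end DownShift

section Channel

variable {Ω : Type*} [MeasurableSpace Ω] {μ : Measure Ω} [IsProbabilityMeasure μ] {q : ℕ}
  {x₁ x₂ : Ω → Fin q → ZMod 2}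

theorem entB_le_card_of_binary {ι : Type*} [Fintype ι] [DecidableEq ι] {X : Ω → ι → ZMod 2}
    (hX : Measurable X) : entB μ X ≤ Fintype.card ι := by
  have h := entB_le_logb_card (μ := μ) hX
  rwa [Fintype.card_fun, ZMod.card, Nat.cast_pow, Nat.cast_ofNat, logb_pow,
    logb_self_eq_one one_lt_two, mul_one] at h

theorem entB_le_entB_topBits_add {X : Ω → Fin q → ZMod 2} (hX : Measurable X) (k : ℕ) :
    entB μ X ≤ entB μ (fun ω => topBits k (X ω)) + (q - k : ℕ) := by
  set low := fun ω (i : {i : Fin q // ¬i.val < k}) => X ω i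
  have hcard : Fintype.card {i : Fin q // ¬i.val < k} = q - k := by
    rw [Fintype.card_subtype_compl, Fintype.card_subtype, Fin.card_filter_val_lt,
      Fintype.card_fin]
    omega
  calc entB μ X ≤ entB μ (fun ω => (topBits k (X ω), low ω)) :=
        entB_le_of_factorsThrough (by fun_prop) fun ω ω' h => by
          simp only [Prod.mk.injEq, topBits, low, funext_iff, Subtype.forall] at h
          funext i
          by_cases hi : i.val < k
          exacts [h.1 i hi, h.2 i hi]
    _ ≤ entB μ (fun ω => topBits k (X ω)) + entB μ low := entB_pair_le (by fun_prop) (by fun_prop)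
    _ ≤ _ := by
        gcongr
        exact hcard ▸ entB_le_card_of_binary (by fun_prop)

theorem entB_topBits_add_downShift_le {k j l s t : ℕ} (hx₁ : Measurable x₁)
    (hx₂ : Measurable x₂) (hj : k ≤ j + s) (hl : k ≤ l + t) :
    entB μ (fun ω => topBits k (downShift q s (x₁ ω) + downShift q t (x₂ ω))) ≤
      entB μ (fun ω => topBits j (x₁ ω)) + entB μ (fun ω => topBits l (x₂ ω)) :=
  calc _ ≤ entB μ (fun ω => (topBits j (x₁ ω), topBits l (x₂ ω))) :=
        entB_le_of_factorsThrough (by fun_prop) fun ω ω' h => by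
          simp only [Prod.mk.injEq] at h
          simp only [topBits_add, topBits_downShift_eq hj h.1, topBits_downShift_eq hl h.2]
    _ ≤ _ := entB_pair_le (by fun_prop) (by fun_prop)

theorem entB_topBits_add_entB_topBits_le {k : ℕ} (hk : k ≤ q) (hx₁ : Measurable x₁)
    (hx₂ : Measurable x₂) (hindep : IndepFun x₁ x₂ μ) :
    entB μ (fun ω => topBits (q - k) (x₁ ω)) + entB μ (fun ω => topBits k (x₂ ω)) ≤
      entB μ (fun ω => x₁ ω + downShift q (q - k) (x₂ ω)) := by
  refine entB_add_entB_le_of_factorsThrough hx₁ (by fun_prop) (by fun_prop) (by fun_prop)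
    (hindep.comp measurable_id (Measurable.of_discrete (f := topBits k)))
    (fun ω ω' h => by simp only [h]) (fun ω ω' h => ?_) (fun ω ω' h => ?_)
  · simpa only [topBits_add_downShift le_rfl] using congrArg (topBits (q - k)) h
  · simp only [Prod.mk.injEq] at h
    obtain ⟨hy, hx⟩ := h
    rw [hx] at hy
    exact topBits_eq_of_downShift_eq (by omega) (add_left_cancel hy)

end Channel

/-- equations (151)–(157): in the ADT deterministic model with `q = n₁`,
if `n₁ − 2n₂ ≥ m₁ − m₂` and `n₂ ≤ m₂ ≤ m₁`, then for independent `x₁, x₂`: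
`H(y_a) − H(y_b) ≤ m₂ − n₂` (entropies in bits), where
`y_a = S^{q−m₁}x₁ ⊕ S^{q−m₂}x₂` and `y_b = S^{q−n₁}x₁ ⊕ S^{q−n₂}x₂`. -/
theorem stmt13 {Ω : Type*} [MeasurableSpace Ω] (μ : Measure Ω) [IsProbabilityMeasure μ]
    (m₁ m₂ n₁ n₂ : ℕ) (hn2m2 : n₂ ≤ m₂) (hm : m₂ ≤ m₁) (hmax : m₁ ≤ n₁)
    (hcond : m₁ + 2 * n₂ ≤ n₁ + m₂)
    (x₁ x₂ : Ω → Fin n₁ → ZMod 2)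
    (hx₁ : Measurable x₁) (hx₂ : Measurable x₂)
    (hindep : IndepFun x₁ x₂ μ) :
    entB μ (fun ω => downShift n₁ (n₁ - m₁) (x₁ ω) + downShift n₁ (n₁ - m₂) (x₂ ω)) -
    entB μ (fun ω => downShift n₁ (n₁ - n₁) (x₁ ω) + downShift n₁ (n₁ - n₂) (x₂ ω)) ≤
      (m₂ : ℝ) - (n₂ : ℝ) := by
  have hdrop := entB_le_entB_topBits_add (μ := μ)
    (X := fun ω => downShift n₁ (n₁ - m₁) (x₁ ω) + downShift n₁ (n₁ - m₂) (x₂ ω))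
    (by fun_prop) (n₁ - (m₂ - n₂))
  rw [show n₁ - (n₁ - (m₂ - n₂)) = m₂ - n₂ by omega, Nat.cast_sub hn2m2] at hdrop
  have htop := entB_topBits_add_downShift_le (μ := μ) (k := n₁ - (m₂ - n₂)) (j := n₁ - n₂)
    (l := n₂) (s := n₁ - m₁) (t := n₁ - m₂) hx₁ hx₂ (by omega) (by omega)
  have hlower := entB_topBits_add_entB_topBits_le (μ := μ) (k := n₂) (by omega) hx₁ hx₂ hindep
  simp only [Nat.sub_self, downShift_zero]
  linarith
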